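/- arXiv:2111.13631 — 6 statements merged into one kernel-verified Lean document; each statement's English description precedes it below -/
import Mathlib

section
/- Let φ : ℝ → ℝ be smooth (C^∞) with φ^{(m)}(0) = 0 for every m ∈ ℕ (including m = 0, i.e. φ is flat at 0). Define g : ℝ → ℝ by g(r) = φ(√r) for r ≥ 0 and g(r) = 0 for r < 0. Then g is smooth on ℝ. -/
/-!
All functions `s ↦ φ⁽ʲ⁾(s) / sᵖ` tend to `0` at `0`, by Taylor's theorem and flatness, and so does
every linear combination `f` of them. Such an `f` satisfies `f'(s) = 2s · g(s)` for `s ≠ 0`, with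
`g` again a combination of the same kind. Therefore `r ↦ f(√r)` has derivative `r ↦ g(√r)`
everywhere: for `r > 0` by the chain rule, on `r < 0` both sides vanish, and at `r = 0` the
derivative extends continuously. Induction on the order of differentiability then gives
smoothness of `r ↦ φ(√r)`.
-/

open Filter Topology
open scoped ContDiff

theorem isLittleO_pow_of_iteratedDeriv_eq_zero {E : Type*} [NormedAddCommGroup E]
    [NormedSpace ℝ E] {f : ℝ → E} {x₀ : ℝ} {n : ℕ} (hf : ContDiff ℝ n f)
    (hflat : ∀ k ≤ n, iteratedDeriv k f x₀ = 0) :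
    f =o[𝓝 x₀] fun x => (x - x₀) ^ n := by
  have htaylor : ∀ x, taylorWithinEval f n Set.univ x₀ x = 0 := fun x => by
    rw [taylor_within_apply]
    refine Finset.sum_eq_zero fun k hk => ?_
    rw [iteratedDerivWithin_univ, hflat k (Nat.lt_succ_iff.mp (Finset.mem_range.mp hk)),
      smul_zero]
  simpa [htaylor] using taylor_isLittleO_univ (x₀ := x₀) hf

theorem hasDerivAt_comp_sqrt {f g : ℝ → ℝ} (hf : Tendsto f (𝓝 0) (𝓝 0))
    (hg : Tendsto g (𝓝 0) (𝓝 0)) (hfg : ∀ s > 0, HasDerivAt f (2 * s * g s) s) (r : ℝ) :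
    HasDerivAt (fun r => f √r) (g √r) r := by
  have hsqrt : Tendsto Real.sqrt (𝓝 0) (𝓝 0) := by
    simpa using Real.continuous_sqrt.tendsto 0
  have hf0 : f 0 = 0 := tendsto_nhds_unique (tendsto_pure_nhds f 0) (hf.mono_left (pure_le_nhds 0))
  have hg0 : g 0 = 0 := tendsto_nhds_unique (tendsto_pure_nhds g 0) (hg.mono_left (pure_le_nhds 0))
  refine hasDerivAt_of_hasDerivAt_of_ne' (f := fun r => f √r) (g := fun r => g √r) (x := 0)
    (fun y hy => ?_) ?_ ?_ r
  · rcases hy.lt_or_gt with hy | hy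
    · have hconst : (fun r => f √r) =ᶠ[𝓝 y] fun _ => 0 := by
        filter_upwards [Iio_mem_nhds hy] with x hx
        rw [Real.sqrt_eq_zero'.mpr hx.le, hf0]
      rw [Real.sqrt_eq_zero'.mpr hy.le, hg0]
      exact (hasDerivAt_const y 0).congr_of_eventuallyEq hconst
    · have hs : 0 < √y := Real.sqrt_pos.mpr hy
      exact ((hfg _ hs).comp y (Real.hasDerivAt_sqrt hy.ne')).congr_deriv (by field_simp)
  · simpa [ContinuousAt, hf0, Function.comp_def] using hf.comp hsqrt
  · simpa [ContinuousAt, hg0, Function.comp_def] using hg.comp hsqrt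

theorem contDiff_comp_sqrt_of_closed_under_deriv {S : Set (ℝ → ℝ)}
    (hS_tendsto : ∀ f ∈ S, Tendsto f (𝓝 0) (𝓝 0))
    (hS_deriv : ∀ f ∈ S, ∃ g ∈ S, ∀ s > 0, HasDerivAt f (2 * s * g s) s)
    {f : ℝ → ℝ} (hf : f ∈ S) : ContDiff ℝ ∞ fun r => f √r := by
  have hderiv : ∀ f ∈ S, ∃ g ∈ S, ∀ r, HasDerivAt (fun r => f √r) (g √r) r := by
    intro f hf
    obtain ⟨g, hg, hfg⟩ := hS_deriv f hf
    exact ⟨g, hg, hasDerivAt_comp_sqrt (hS_tendsto f hf) (hS_tendsto g hg) hfg⟩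
  suffices ∀ n : ℕ, ∀ f ∈ S, ContDiff ℝ n fun r => f √r from
    contDiff_infty.mpr fun n => this n f hf
  intro n
  induction n with
  | zero =>
    intro f hf
    obtain ⟨g, -, hfg⟩ := hderiv f hf
    exact contDiff_zero.mpr (continuous_iff_continuousAt.mpr fun r => (hfg r).continuousAt)
  | succ n ih =>
    intro f hf
    obtain ⟨g, hg, hfg⟩ := hderiv f hf
    rw [Nat.cast_succ, contDiff_succ_iff_deriv]
    refine ⟨fun r => (hfg r).differentiableAt, by simp, ?_⟩
    rw [funext fun r => (hfg r).deriv]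
    exact ih g hg

noncomputable def iterDerivDivPow (φ : ℝ → ℝ) (j p : ℕ) (s : ℝ) : ℝ := deriv^[j] φ s / s ^ p

noncomputable def iterDerivDivPowSpan (φ : ℝ → ℝ) : Submodule ℝ (ℝ → ℝ) :=
  Submodule.span ℝ (Set.range fun jp : ℕ × ℕ => iterDerivDivPow φ jp.1 jp.2)

theorem iterDerivDivPow_mem_span (φ : ℝ → ℝ) (j p : ℕ) :
    iterDerivDivPow φ j p ∈ iterDerivDivPowSpan φ :=
  Submodule.subset_span ⟨(j, p), rfl⟩

theorem hasDerivAt_iterDerivDivPow {φ : ℝ → ℝ} (hφ : ContDiff ℝ ∞ φ) (j p : ℕ) {s : ℝ}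
    (hs : s ≠ 0) :
    HasDerivAt (iterDerivDivPow φ j p)
      (2 * s * (2⁻¹ * iterDerivDivPow φ (j + 1) (p + 1) s
        - p / 2 * iterDerivDivPow φ j (p + 2) s)) s := by
  have hF : HasDerivAt (deriv^[j] φ) (deriv^[j + 1] φ s) s := by
    rw [Function.iterate_succ_apply']
    exact ((hφ.iterate_deriv j).differentiable (by simp) s).hasDerivAt
  refine (hF.div (hasDerivAt_pow p s) (pow_ne_zero p hs)).congr_deriv ?_
  unfold iterDerivDivPow
  rcases p with _ | p
  · field_simp
    ring
  · rw [Nat.add_sub_cancel]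
    field_simp
    ring

theorem tendsto_iterDerivDivPow {φ : ℝ → ℝ} (hφ : ContDiff ℝ ∞ φ)
    (hflat : ∀ m : ℕ, iteratedDeriv m φ 0 = 0) (j p : ℕ) :
    Tendsto (iterDerivDivPow φ j p) (𝓝 0) (𝓝 0) := by
  have hflat_j : ∀ k ≤ p, iteratedDeriv k (deriv^[j] φ) 0 = 0 := fun k _ => by
    rw [iteratedDeriv_eq_iterate, ← Function.iterate_add_apply, ← iteratedDeriv_eq_iterate,
      hflat]
  unfold iterDerivDivPow
  simpa using (isLittleO_pow_of_iteratedDeriv_eq_zero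
    ((hφ.iterate_deriv j).of_le (by exact_mod_cast le_top)) hflat_j).tendsto_div_nhds_zero

theorem exists_hasDerivAt_of_mem_iterDerivDivPowSpan {φ : ℝ → ℝ} (hφ : ContDiff ℝ ∞ φ)
    {f : ℝ → ℝ} (hf : f ∈ iterDerivDivPowSpan φ) :
    ∃ g ∈ iterDerivDivPowSpan φ, ∀ s > 0, HasDerivAt f (2 * s * g s) s := by
  induction hf using Submodule.span_induction with
  | mem f hf =>
    obtain ⟨⟨j, p⟩, rfl⟩ := hf
    refine ⟨_, Submodule.sub_mem _
      (Submodule.smul_mem _ 2⁻¹ (iterDerivDivPow_mem_span φ (j + 1) (p + 1)))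
      (Submodule.smul_mem _ ((p : ℝ) / 2) (iterDerivDivPow_mem_span φ j (p + 2))),
      fun s hs => hasDerivAt_iterDerivDivPow hφ j p hs.ne'⟩
  | zero => exact ⟨0, Submodule.zero_mem _, fun s _ => by simp⟩
  | add f₁ f₂ _ _ h₁ h₂ =>
    obtain ⟨g₁, hg₁, hfg₁⟩ := h₁
    obtain ⟨g₂, hg₂, hfg₂⟩ := h₂
    exact ⟨g₁ + g₂, Submodule.add_mem _ hg₁ hg₂, fun s hs =>
      ((hfg₁ s hs).add (hfg₂ s hs)).congr_deriv (by simp only [Pi.add_apply]; ring)⟩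
  | smul c f _ h =>
    obtain ⟨g, hg, hfg⟩ := h
    exact ⟨c • g, Submodule.smul_mem _ c hg, fun s hs =>
      ((hfg s hs).const_mul c).congr_deriv (by simp only [Pi.smul_apply, smul_eq_mul]; ring)⟩

theorem tendsto_of_mem_iterDerivDivPowSpan {φ : ℝ → ℝ} (hφ : ContDiff ℝ ∞ φ)
    (hflat : ∀ m : ℕ, iteratedDeriv m φ 0 = 0) {f : ℝ → ℝ} (hf : f ∈ iterDerivDivPowSpan φ) :
    Tendsto f (𝓝 0) (𝓝 0) := by
  induction hf using Submodule.span_induction with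
  | mem f hf =>
    obtain ⟨⟨j, p⟩, rfl⟩ := hf
    exact tendsto_iterDerivDivPow hφ hflat j p
  | zero => exact tendsto_const_nhds
  | add f₁ f₂ _ _ h₁ h₂ =>
    have h := h₁.add h₂
    rwa [add_zero] at h
  | smul c f _ h =>
    have h := h.const_smul c
    rwa [smul_zero] at h

/-- If `φ : ℝ → ℝ` is smooth and flat at `0` (all derivatives,
including the value, vanish at `0`), then `g(r) = φ(√r)` for `r ≥ 0`, `g(r) = 0`
for `r < 0`, defines a smooth function on `ℝ`. -/
theorem stmt_3 (φ : ℝ → ℝ) (hφ : ContDiff ℝ (⊤ : ℕ∞) φ)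
    (hflat : ∀ m : ℕ, iteratedDeriv m φ 0 = 0) :
    ContDiff ℝ (⊤ : ℕ∞) (fun r : ℝ => if 0 ≤ r then φ (Real.sqrt r) else 0) := by
  have hφ0 : φ 0 = 0 := by simpa using hflat 0
  have hg : (fun r : ℝ => if 0 ≤ r then φ (Real.sqrt r) else 0) =
      fun r => iterDerivDivPow φ 0 0 √r := by
    ext r
    by_cases hr : 0 ≤ r
    · simp [iterDerivDivPow, hr]
    · simp [iterDerivDivPow, hr, Real.sqrt_eq_zero'.mpr (not_le.mp hr).le, hφ0]
  rw [hg]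
  exact contDiff_comp_sqrt_of_closed_under_deriv
    (fun f hf => tendsto_of_mem_iterDerivDivPowSpan hφ hflat hf)
    (fun f hf => exists_hasDerivAt_of_mem_iterDerivDivPowSpan hφ hf)
    (iterDerivDivPow_mem_span φ 0 0)
end

section
/- Let n ≥ 1 and let φ₁, φ₂ : ℝ × ℝⁿ → ℝ × ℝⁿ be smooth maps, each of the form φ = (f, g) where f : ℝ × ℝⁿ → ℝ is odd in ρ and g : ℝ × ℝⁿ → ℝⁿ has every component even in ρ. Then the composition φ₂ ∘ φ₁ is also of this form: its first component is odd in ρ and the components of its ℝⁿ-valued part are even in ρ. -/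
/-- A smooth function `F : ℝ × ℝⁿ → ℝ` is *odd in ρ* if all even-order partial
derivatives in the first variable vanish at every point `(0, s)`. -/
def OddInRho (n : ℕ) (F : ℝ × (Fin n → ℝ) → ℝ) : Prop :=
  ∀ (s : Fin n → ℝ) (m : ℕ), Even m → iteratedDeriv m (fun ρ : ℝ => F (ρ, s)) 0 = 0

/-- A smooth function `F : ℝ × ℝⁿ → ℝ` is *even in ρ* if all odd-order partial
derivatives in the first variable vanish at every point `(0, s)`. -/
def EvenInRho (n : ℕ) (F : ℝ × (Fin n → ℝ) → ℝ) : Prop :=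
  ∀ (s : Fin n → ℝ) (m : ℕ), Odd m → iteratedDeriv m (fun ρ : ℝ => F (ρ, s)) 0 = 0

/-!
Write `σ (ρ, s) = (-ρ, s)`. For smooth `φ`, the parity conditions say exactly that the
`ρ`-derivatives of `φ ∘ σ` and `σ ∘ φ` agree along `ρ = 0`. The difference `φ ∘ σ - σ ∘ φ` is then
flat in `ρ` along the hyperplane; since it vanishes there and partial derivatives commute, all its
derivatives vanish there, so `φ ∘ σ` and `σ ∘ φ` have the same full jets along `ρ = 0`. An even map
sends the hyperplane into itself, and by Faà di Bruno the jet of a composition depends only on the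
jets of its factors, so `φ₂ ∘ (φ₁ ∘ σ)`, `(φ₂ ∘ σ) ∘ φ₁` and `(σ ∘ φ₂) ∘ φ₁` have the same jets.
-/

open Function ContinuousLinearMap
open scoped ContDiff

section DirDeriv

variable {X F : Type*} [NormedAddCommGroup X] [NormedSpace ℝ X]
  [NormedAddCommGroup F] [NormedSpace ℝ F]

noncomputable def dirDeriv (v : X) (H : X → F) : X → F := fun x => fderiv ℝ H x v

lemma dirDeriv_eq_comp (v : X) (H : X → F) : dirDeriv v H = apply ℝ F v ∘ fderiv ℝ H := rfl

lemma ContDiff.fderiv_infty {H : X → F} (hH : ContDiff ℝ ∞ H) : ContDiff ℝ ∞ (fderiv ℝ H) :=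
  hH.fderiv_right (by simp)

lemma contDiff_dirDeriv {H : X → F} (hH : ContDiff ℝ ∞ H) (v : X) :
    ContDiff ℝ ∞ (dirDeriv v H) :=
  (apply ℝ F v).contDiff.comp hH.fderiv_infty

lemma contDiff_iterate_dirDeriv {H : X → F} (hH : ContDiff ℝ ∞ H) (v : X) (k : ℕ) :
    ContDiff ℝ ∞ ((dirDeriv v)^[k] H) := by
  induction k generalizing H with
  | zero => exact hH
  | succ k ih => exact ih (contDiff_dirDeriv hH v)

lemma fderiv_dirDeriv_apply {H : X → F} (hH : ContDiff ℝ ∞ H) (x v w : X) :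
    fderiv ℝ (dirDeriv w H) x v = fderiv ℝ (fderiv ℝ H) x v w := by
  rw [dirDeriv_eq_comp, fderiv_comp x (apply ℝ F w).differentiableAt
    (hH.fderiv_infty.differentiable (by simp)).differentiableAt, ContinuousLinearMap.fderiv]
  rfl

lemma dirDeriv_comm {H : X → F} (hH : ContDiff ℝ ∞ H) (v w : X) :
    dirDeriv v (dirDeriv w H) = dirDeriv w (dirDeriv v H) := by
  funext x
  change fderiv ℝ (dirDeriv w H) x v = fderiv ℝ (dirDeriv v H) x w
  rw [fderiv_dirDeriv_apply hH, fderiv_dirDeriv_apply hH]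
  exact (hH.contDiffAt.isSymmSndFDerivAt (by simp; norm_cast)).eq v w

lemma iterate_dirDeriv_comm {H : X → F} (hH : ContDiff ℝ ∞ H) (v w : X) (k : ℕ) :
    (dirDeriv v)^[k] (dirDeriv w H) = dirDeriv w ((dirDeriv v)^[k] H) := by
  induction k generalizing H with
  | zero => rfl
  | succ k ih =>
    rw [iterate_succ_apply, iterate_succ_apply, dirDeriv_comm hH, ih (contDiff_dirDeriv hH v)]

lemma iteratedFDeriv_succ_apply_eq_dirDeriv {H : X → F} (hH : ContDiff ℝ ∞ H) (m : ℕ) (x : X)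
    (v : Fin (m + 1) → X) :
    iteratedFDeriv ℝ (m + 1) H x v =
      iteratedFDeriv ℝ m (dirDeriv (v (Fin.last m)) H) x (Fin.init v) := by
  rw [iteratedFDeriv_succ_apply_right, dirDeriv_eq_comp,
    (apply ℝ F _).iteratedFDeriv_comp_left hH.fderiv_infty.contDiffAt (by exact_mod_cast le_top)]
  rfl

lemma iteratedFDeriv_apply_const_eq_iterate_dirDeriv {H : X → F} (hH : ContDiff ℝ ∞ H) (k : ℕ)
    (x v : X) : iteratedFDeriv ℝ k H x (fun _ => v) = (dirDeriv v)^[k] H x := by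
  induction k generalizing H with
  | zero => simp
  | succ k ih =>
    rw [iteratedFDeriv_succ_apply_eq_dirDeriv hH, iterate_succ_apply]
    exact ih (contDiff_dirDeriv hH v)

end DirDeriv

lemma ContinuousLinearMap.iteratedDeriv_comp_left {𝕜 F G : Type*} [NontriviallyNormedField 𝕜]
    [NormedAddCommGroup F] [NormedSpace 𝕜 F] [NormedAddCommGroup G] [NormedSpace 𝕜 G]
    (T : F →L[𝕜] G) {u : 𝕜 → F} {t : 𝕜} {k : ℕ} (hu : ContDiffAt 𝕜 k u t) :
    iteratedDeriv k (T ∘ u) t = T (iteratedDeriv k u t) := by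
  rw [iteratedDeriv_eq_iteratedFDeriv, iteratedDeriv_eq_iteratedFDeriv,
    T.iteratedFDeriv_comp_left hu le_rfl]
  rfl

lemma ftaylorSeries_comp_congr {𝕜 X Y Z : Type*} [NontriviallyNormedField 𝕜]
    [NormedAddCommGroup X] [NormedSpace 𝕜 X] [NormedAddCommGroup Y] [NormedSpace 𝕜 Y]
    [NormedAddCommGroup Z] [NormedSpace 𝕜 Z] {f₁ f₂ : X → Y} {g₁ g₂ : Y → Z} {x : X}
    (hf₁ : ContDiffAt 𝕜 ∞ f₁ x) (hf₂ : ContDiffAt 𝕜 ∞ f₂ x)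
    (hg₁ : ContDiffAt 𝕜 ∞ g₁ (f₁ x)) (hg₂ : ContDiffAt 𝕜 ∞ g₂ (f₁ x))
    (hf : ftaylorSeries 𝕜 f₁ x = ftaylorSeries 𝕜 f₂ x)
    (hg : ftaylorSeries 𝕜 g₁ (f₁ x) = ftaylorSeries 𝕜 g₂ (f₁ x)) :
    ftaylorSeries 𝕜 (g₁ ∘ f₁) x = ftaylorSeries 𝕜 (g₂ ∘ f₂) x := by
  have hx : f₂ x = f₁ x := by
    simpa only [ftaylorSeries, iteratedFDeriv_zero_apply] using
      (congrArg (fun p => p 0 (0 : Fin 0 → X)) hf).symm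
  rw [← hx] at hg₂
  funext m
  change iteratedFDeriv 𝕜 m (g₁ ∘ f₁) x = iteratedFDeriv 𝕜 m (g₂ ∘ f₂) x
  rw [iteratedFDeriv_comp hg₁ hf₁ (by exact_mod_cast le_top),
    iteratedFDeriv_comp hg₂ hf₂ (by exact_mod_cast le_top), hf, hx, hg]

section Hyperplane

variable {E F : Type*} [NormedAddCommGroup E] [NormedSpace ℝ E]
  [NormedAddCommGroup F] [NormedSpace ℝ F]

lemma iteratedDeriv_eq_iterate_dirDeriv {H : ℝ × E → F} (hH : ContDiff ℝ ∞ H) (k : ℕ) (ρ : ℝ)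
    (s : E) : iteratedDeriv k (fun ρ => H (ρ, s)) ρ = (dirDeriv ((1, 0) : ℝ × E))^[k] H (ρ, s) := by
  induction k generalizing H with
  | zero => simp
  | succ k ih =>
    have hderiv : deriv (fun ρ => H (ρ, s)) = fun ρ => dirDeriv ((1, 0) : ℝ × E) H (ρ, s) := by
      funext ρ
      exact ((hH.differentiable (by simp)).differentiableAt.hasFDerivAt.comp_hasDerivAt ρ
        ((hasDerivAt_id ρ).prodMk (hasDerivAt_const ρ s))).deriv
    rw [iteratedDeriv_succ', hderiv, ih (contDiff_dirDeriv hH _), iterate_succ_apply]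

lemma iteratedDeriv_eq_iteratedFDeriv_apply_const {H : ℝ × E → F} (hH : ContDiff ℝ ∞ H) (k : ℕ)
    (ρ : ℝ) (s : E) :
    iteratedDeriv k (fun ρ => H (ρ, s)) ρ = iteratedFDeriv ℝ k H (ρ, s) (fun _ => (1, 0)) := by
  rw [iteratedDeriv_eq_iterate_dirDeriv hH, iteratedFDeriv_apply_const_eq_iterate_dirDeriv hH]

def FlatAtFstZero (H : ℝ × E → F) : Prop :=
  ∀ s k, (dirDeriv ((1, 0) : ℝ × E))^[k] H (0, s) = 0

lemma fderiv_eq_zero_of_normal_deriv_eq_zero {G : ℝ × E → F} {s : E}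
    (hG : DifferentiableAt ℝ G (0, s)) (hG₀ : ∀ t, G (0, t) = 0)
    (hG₁ : fderiv ℝ G (0, s) (1, 0) = 0) : fderiv ℝ G (0, s) = 0 := by
  have htan : HasFDerivAt (fun t => G (0, t)) ((fderiv ℝ G (0, s)).comp (inr ℝ ℝ E)) s :=
    hG.hasFDerivAt.comp s (inr ℝ ℝ E).hasFDerivAt
  simp only [hG₀] at htan
  ext1
  · ext1
    simpa using hG₁
  · simpa using ((hasFDerivAt_const 0 s).unique htan).symm

lemma FlatAtFstZero.dirDeriv {H : ℝ × E → F} (hH : ContDiff ℝ ∞ H) (hflat : FlatAtFstZero H)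
    (v : ℝ × E) : FlatAtFstZero (dirDeriv v H) := by
  intro s k
  rw [iterate_dirDeriv_comm hH]
  refine congrArg (· v) (fderiv_eq_zero_of_normal_deriv_eq_zero ?_ (fun t => hflat t k) ?_)
  · exact (contDiff_iterate_dirDeriv hH _ k).differentiable (by simp) _
  · have h := hflat s (k + 1)
    rwa [iterate_succ_apply'] at h

lemma FlatAtFstZero.iteratedFDeriv_eq_zero {H : ℝ × E → F} (hH : ContDiff ℝ ∞ H)
    (hflat : FlatAtFstZero H) (m : ℕ) (s : E) : iteratedFDeriv ℝ m H (0, s) = 0 := by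
  induction m generalizing H with
  | zero => ext v; simpa using hflat s 0
  | succ m ih =>
    ext v
    rw [iteratedFDeriv_succ_apply_eq_dirDeriv hH,
      ih (contDiff_dirDeriv hH _) (hflat.dirDeriv hH _)]
    rfl

lemma ftaylorSeries_eq_iff_iteratedDeriv_eq {F₁ F₂ : ℝ × E → F} (h₁ : ContDiff ℝ ∞ F₁)
    (h₂ : ContDiff ℝ ∞ F₂) :
    (∀ s, ftaylorSeries ℝ F₁ (0, s) = ftaylorSeries ℝ F₂ (0, s)) ↔
      ∀ s k, iteratedDeriv k (fun ρ => F₁ (ρ, s)) 0 = iteratedDeriv k (fun ρ => F₂ (ρ, s)) 0 := by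
  have hΔ : ContDiff ℝ ∞ (F₁ - F₂) := h₁.sub h₂
  have hsub (k : ℕ) (x : ℝ × E) : iteratedFDeriv ℝ k (F₁ - F₂) x =
      iteratedFDeriv ℝ k F₁ x - iteratedFDeriv ℝ k F₂ x :=
    iteratedFDeriv_sub_apply (h₁.contDiffAt.of_le (by exact_mod_cast le_top))
      (h₂.contDiffAt.of_le (by exact_mod_cast le_top))
  simp only [iteratedDeriv_eq_iteratedFDeriv_apply_const h₁,
    iteratedDeriv_eq_iteratedFDeriv_apply_const h₂]
  refine ⟨fun h s k => congrArg (fun p => p k fun _ => (1, 0)) (h s), fun h s => funext fun m => ?_⟩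
  have hflat : FlatAtFstZero (F₁ - F₂) := fun t k => by
    rw [← iteratedFDeriv_apply_const_eq_iterate_dirDeriv hΔ, hsub,
      sub_apply, h t k, sub_self]
  rw [← sub_eq_zero]
  exact (hsub m _).symm.trans (hflat.iteratedFDeriv_eq_zero hΔ m s)

end Hyperplane

section EvenMap

variable {E E' E'' : Type*} [NormedAddCommGroup E] [NormedSpace ℝ E]
  [NormedAddCommGroup E'] [NormedSpace ℝ E'] [NormedAddCommGroup E''] [NormedSpace ℝ E'']

noncomputable def negFst : ℝ × E →L[ℝ] ℝ × E := (-fst ℝ ℝ E).prod (snd ℝ ℝ E)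

@[simp]
lemma negFst_apply (x : ℝ × E) : negFst x = (-x.1, x.2) := rfl

lemma contDiff_negFst {n : WithTop ℕ∞} : ContDiff ℝ n (negFst : ℝ × E → ℝ × E) :=
  ContinuousLinearMap.contDiff _

/-- `φ` commutes with the reflection `negFst` to infinite order along `ρ = 0`; for smooth maps of
`ℝ × ℝⁿ` this is the paper's notion of an even map (`isEvenMap_iff`). -/
def IsEvenMap (φ : ℝ × E → ℝ × E') : Prop :=
  ∀ s, ftaylorSeries ℝ (φ ∘ negFst) (0, s) = ftaylorSeries ℝ (negFst ∘ φ) (0, s)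

lemma IsEvenMap.apply_zero {φ : ℝ × E → ℝ × E'} (hφ : IsEvenMap φ) (s : E) :
    φ (0, s) = (0, (φ (0, s)).2) := by
  have h := congrArg (fun p => p 0 (0 : Fin 0 → ℝ × E)) (hφ s)
  simp only [ftaylorSeries, iteratedFDeriv_zero_apply, comp_apply, negFst_apply, neg_zero] at h
  exact Prod.ext (self_eq_neg.mp (congrArg Prod.fst h)) rfl

theorem IsEvenMap.comp {φ₁ : ℝ × E → ℝ × E'} {φ₂ : ℝ × E' → ℝ × E''} (h₁ : ContDiff ℝ ∞ φ₁)
    (h₂ : ContDiff ℝ ∞ φ₂) (e₁ : IsEvenMap φ₁) (e₂ : IsEvenMap φ₂) : IsEvenMap (φ₂ ∘ φ₁) := by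
  intro s
  have step₁ : ftaylorSeries ℝ (φ₂ ∘ (φ₁ ∘ negFst)) (0, s) =
      ftaylorSeries ℝ (φ₂ ∘ (negFst ∘ φ₁)) (0, s) :=
    ftaylorSeries_comp_congr (h₁.comp contDiff_negFst).contDiffAt (contDiff_negFst.comp h₁).contDiffAt
      h₂.contDiffAt h₂.contDiffAt (e₁ s) rfl
  have step₂ : ftaylorSeries ℝ ((φ₂ ∘ negFst) ∘ φ₁) (0, s) =
      ftaylorSeries ℝ ((negFst ∘ φ₂) ∘ φ₁) (0, s) :=
    ftaylorSeries_comp_congr h₁.contDiffAt h₁.contDiffAt (h₂.comp contDiff_negFst).contDiffAt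
      (contDiff_negFst.comp h₂).contDiffAt rfl (by rw [e₁.apply_zero]; exact e₂ _)
  exact step₁.trans step₂

lemma neg_one_pow_smul_eq_negFst_iff (a : ℝ × E) (k : ℕ) :
    (-1 : ℝ) ^ k • a = negFst a ↔ (Even k → a.1 = 0) ∧ (Odd k → a.2 = 0) := by
  rcases Nat.even_or_odd k with hk | hk
  · simp [hk, hk.neg_one_pow, Nat.not_odd_iff_even.mpr hk, Prod.ext_iff, self_eq_neg]
  · simp [hk, hk.neg_one_pow, Nat.not_even_iff_odd.mpr hk, Prod.ext_iff, neg_eq_iff_add_eq_zero,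
      ← two_smul ℝ a.2]

lemma isEvenMap_iff_iteratedDeriv {φ : ℝ × E → ℝ × E'} (hφ : ContDiff ℝ ∞ φ) :
    IsEvenMap φ ↔ ∀ s k, (-1 : ℝ) ^ k • iteratedDeriv k (fun ρ => φ (ρ, s)) 0 =
      negFst (iteratedDeriv k (fun ρ => φ (ρ, s)) 0) := by
  have hline (s : E) : ContDiff ℝ ∞ fun ρ : ℝ => φ (ρ, s) :=
    hφ.comp (contDiff_id.prodMk contDiff_const)
  refine (ftaylorSeries_eq_iff_iteratedDeriv_eq (hφ.comp contDiff_negFst)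
    (contDiff_negFst.comp hφ)).trans (forall₂_congr fun s k => ?_)
  have hneg := iteratedDeriv_comp_neg k (fun ρ => φ (ρ, s)) 0
  rw [neg_zero] at hneg
  change iteratedDeriv k (fun ρ => φ (-ρ, s)) 0 = iteratedDeriv k (negFst ∘ fun ρ => φ (ρ, s)) 0 ↔ _
  rw [hneg,
    negFst.iteratedDeriv_comp_left ((hline s).contDiffAt.of_le (by exact_mod_cast le_top))]

lemma isEvenMap_iff {n m : ℕ} {φ : ℝ × (Fin n → ℝ) → ℝ × (Fin m → ℝ)} (hφ : ContDiff ℝ ∞ φ) :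
    IsEvenMap φ ↔ OddInRho n (fun p => (φ p).1) ∧ ∀ j, EvenInRho n fun p => (φ p).2 j := by
  have hline (s : Fin n → ℝ) (k : ℕ) : ContDiffAt ℝ k (fun ρ : ℝ => φ (ρ, s)) 0 :=
    (hφ.comp (contDiff_id.prodMk contDiff_const)).contDiffAt.of_le (by exact_mod_cast le_top)
  have hfst (s k) : iteratedDeriv k (fun ρ => (φ (ρ, s)).1) 0 =
      (iteratedDeriv k (fun ρ => φ (ρ, s)) 0).1 :=
    (fst ℝ ℝ (Fin m → ℝ)).iteratedDeriv_comp_left (hline s k)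
  have hsnd (s k j) : iteratedDeriv k (fun ρ => (φ (ρ, s)).2 j) 0 =
      (iteratedDeriv k (fun ρ => φ (ρ, s)) 0).2 j :=
    ((proj j).comp (snd ℝ ℝ (Fin m → ℝ))).iteratedDeriv_comp_left (hline s k)
  simp only [isEvenMap_iff_iteratedDeriv hφ, neg_one_pow_smul_eq_negFst_iff, OddInRho, EvenInRho,
    hfst, hsnd, funext_iff, Pi.zero_apply]
  exact ⟨fun h => ⟨fun s k hk => (h s k).1 hk, fun j s k hk => (h s k).2 hk j⟩,
    fun ⟨hodd, heven⟩ s k => ⟨hodd s k, fun hk j => heven j s k hk⟩⟩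

end EvenMap

theorem stmt_4_general (n : ℕ)
    (φ₁ φ₂ : ℝ × (Fin n → ℝ) → ℝ × (Fin n → ℝ))
    (h₁ : ContDiff ℝ (⊤ : ℕ∞) φ₁) (h₂ : ContDiff ℝ (⊤ : ℕ∞) φ₂)
    (h₁odd : OddInRho n fun p => (φ₁ p).1)
    (h₁even : ∀ j : Fin n, EvenInRho n fun p => (φ₁ p).2 j)
    (h₂odd : OddInRho n fun p => (φ₂ p).1)
    (h₂even : ∀ j : Fin n, EvenInRho n fun p => (φ₂ p).2 j) :
    OddInRho n (fun p => ((φ₂ ∘ φ₁) p).1) ∧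
      ∀ j : Fin n, EvenInRho n fun p => ((φ₂ ∘ φ₁) p).2 j :=
  (isEvenMap_iff (h₂.comp h₁)).mp <|
    ((isEvenMap_iff h₁).mpr ⟨h₁odd, h₁even⟩).comp h₁ h₂ ((isEvenMap_iff h₂).mpr ⟨h₂odd, h₂even⟩)

/-- The composition of two smooth even maps of the half-space
(first component odd in ρ, remaining components even in ρ) is again an even map. -/
theorem stmt_4 (n : ℕ) (hn : 1 ≤ n)
    (φ₁ φ₂ : ℝ × (Fin n → ℝ) → ℝ × (Fin n → ℝ))
    (h₁ : ContDiff ℝ (⊤ : ℕ∞) φ₁) (h₂ : ContDiff ℝ (⊤ : ℕ∞) φ₂)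
    (h₁odd : OddInRho n fun p => (φ₁ p).1)
    (h₁even : ∀ j : Fin n, EvenInRho n fun p => (φ₁ p).2 j)
    (h₂odd : OddInRho n fun p => (φ₂ p).1)
    (h₂even : ∀ j : Fin n, EvenInRho n fun p => (φ₂ p).2 j) :
    OddInRho n (fun p => ((φ₂ ∘ φ₁) p).1) ∧
      ∀ j : Fin n, EvenInRho n fun p => ((φ₂ ∘ φ₁) p).2 j :=
  stmt_4_general n φ₁ φ₂ h₁ h₂ h₁odd h₁even h₂odd h₂even
end

section
/- Let n ≥ 1, let b : ℝ × ℝⁿ → ℝ and c : ℝ × ℝⁿ → ℝⁿ be smooth, and suppose b(0,s) > 0 for all s ∈ ℝⁿ. Then on the open set Ω = {(ρ,s) ∈ ℝ × ℝⁿ : b(ρ²,s) > 0} the map φ(ρ,s) = (ρ·√(b(ρ², s)), c(ρ², s)) is smooth; moreover its first component is odd in ρ and every component of its ℝⁿ-valued part is even in ρ. -/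
/-!
Both parity claims come from the symmetry `ρ ↦ -ρ`: the function `ρ ↦ c(ρ², s)` is even and
`ρ ↦ ρ √(b(ρ², s))` is odd, and differentiating `m` times multiplies the symmetry by `(-1)^m`,
so the derivatives of the wrong parity are odd functions and vanish at `0`. Smoothness on `Ω`
holds because `√` is smooth away from `0`.
-/

namespace Function

lemma even_comp_sq {α R : Type*} [Monoid R] [HasDistribNeg R] (g : R → α) :
    Function.Even fun x ↦ g (x ^ 2) :=
  fun x ↦ by simp only [neg_sq]

variable {𝕜 F : Type*} [NontriviallyNormedField 𝕜] [NormedAddCommGroup F] [NormedSpace 𝕜 F]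
  {f : 𝕜 → F} {m : ℕ}

lemma Odd.iteratedDeriv_of_even (hf : f.Odd) (hm : Even m) : (iteratedDeriv m f).Odd := by
  intro x
  have h := iteratedDeriv_comp_neg m f x
  rw [funext hf, iteratedDeriv_fun_neg, hm.neg_one_pow, one_smul] at h
  exact h.symm

lemma Even.iteratedDeriv_of_odd (hf : f.Even) (hm : Odd m) : (iteratedDeriv m f).Odd := by
  intro x
  have h := iteratedDeriv_comp_neg m f x
  rw [funext hf, hm.neg_one_pow, neg_one_smul] at h
  rw [h, neg_neg]

end Function

lemma oddInRho_of_odd {n : ℕ} {F : ℝ × (Fin n → ℝ) → ℝ}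
    (hF : ∀ s, Function.Odd fun ρ ↦ F (ρ, s)) : OddInRho n F :=
  fun s _ hm ↦ ((hF s).iteratedDeriv_of_even hm).map_zero

lemma evenInRho_of_even {n : ℕ} {F : ℝ × (Fin n → ℝ) → ℝ}
    (hF : ∀ s, Function.Even fun ρ ↦ F (ρ, s)) : EvenInRho n F :=
  fun s _ hm ↦ ((hF s).iteratedDeriv_of_odd hm).map_zero

theorem stmt_6_general (n : ℕ)
    (b : ℝ × (Fin n → ℝ) → ℝ) (c : ℝ × (Fin n → ℝ) → Fin n → ℝ)
    (hb : ContDiff ℝ (⊤ : ℕ∞) b) (hc : ContDiff ℝ (⊤ : ℕ∞) c) :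
    IsOpen {p : ℝ × (Fin n → ℝ) | 0 < b (p.1 ^ 2, p.2)} ∧
    ContDiffOn ℝ (⊤ : ℕ∞)
      (fun p : ℝ × (Fin n → ℝ) =>
        ((p.1 * Real.sqrt (b (p.1 ^ 2, p.2)), c (p.1 ^ 2, p.2)) : ℝ × (Fin n → ℝ)))
      {p : ℝ × (Fin n → ℝ) | 0 < b (p.1 ^ 2, p.2)} ∧
    OddInRho n (fun p => p.1 * Real.sqrt (b (p.1 ^ 2, p.2))) ∧
    ∀ j : Fin n, EvenInRho n fun p => c (p.1 ^ 2, p.2) j := by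
  have hsq : ContDiff ℝ (⊤ : ℕ∞) fun p : ℝ × (Fin n → ℝ) ↦ (p.1 ^ 2, p.2) :=
    (contDiff_fst.pow 2).prodMk contDiff_snd
  have hbsq := hb.comp hsq
  refine ⟨isOpen_lt continuous_const hbsq.continuous, ?_, ?_, ?_⟩
  · exact (contDiff_fst.contDiffOn.mul (hbsq.contDiffOn.sqrt fun _ hp ↦ hp.ne')).prodMk
      (hc.comp hsq).contDiffOn
  · exact oddInRho_of_odd fun s ↦
      Function.Odd.mul_even (fun _ ↦ rfl) (Function.even_comp_sq fun r ↦ √(b (r, s)))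
  · exact fun j ↦ evenInRho_of_even fun s ↦ Function.even_comp_sq fun r ↦ c (r, s) j

/-- For smooth `b, c` with `b(0,s) > 0` for all `s`, the set
`Ω = {(ρ,s) : b(ρ²,s) > 0}` is open, the map
`φ(ρ,s) = (ρ·√(b(ρ²,s)), c(ρ²,s))` is smooth on `Ω`, its first component is odd
in ρ, and every component of its `ℝⁿ`-valued part is even in ρ. -/
theorem stmt_6 (n : ℕ) (hn : 1 ≤ n)
    (b : ℝ × (Fin n → ℝ) → ℝ) (c : ℝ × (Fin n → ℝ) → Fin n → ℝ)
    (hb : ContDiff ℝ (⊤ : ℕ∞) b) (hc : ContDiff ℝ (⊤ : ℕ∞) c)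
    (hbpos : ∀ s : Fin n → ℝ, 0 < b (0, s)) :
    IsOpen {p : ℝ × (Fin n → ℝ) | 0 < b (p.1 ^ 2, p.2)} ∧
    ContDiffOn ℝ (⊤ : ℕ∞)
      (fun p : ℝ × (Fin n → ℝ) =>
        ((p.1 * Real.sqrt (b (p.1 ^ 2, p.2)), c (p.1 ^ 2, p.2)) : ℝ × (Fin n → ℝ)))
      {p : ℝ × (Fin n → ℝ) | 0 < b (p.1 ^ 2, p.2)} ∧
    OddInRho n (fun p => p.1 * Real.sqrt (b (p.1 ^ 2, p.2))) ∧
    ∀ j : Fin n, EvenInRho n fun p => c (p.1 ^ 2, p.2) j :=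
  stmt_6_general n b c hb hc
end

section
/- Let n ≥ 1 and let k : ℝ × ℝⁿ → ℝ^{n×n} be smooth with k(r,s) a symmetric positive definite matrix, with entries k_{αβ}(r,s) and inverse entries k^{αβ}(r,s) (1 ≤ α,β ≤ n). On Ω = (0,∞) × ℝⁿ with coordinates z = (z⁰, z¹, …, zⁿ) = (r, s¹, …, sⁿ), define the metric components g₀₀ = 1/(4r²), g₀β = g_{β0} = 0, g_{αβ} = k_{αβ}(r,s)/r, let Γᵏᵢⱼ = ½ Σ_l gᵏˡ(∂ᵢ g_{jl} + ∂ⱼ g_{il} − ∂_l g_{ij}) be the associated Christoffel symbols (gᵏˡ the inverse matrix of g_{ij}), and set Γ̂ᵏᵢⱼ := Γᵏᵢⱼ + ½(vᵢ δᵏⱼ + vⱼ δᵏᵢ), where v₀ = 1/r and v_α = 0. Then for all r > 0: Γ̂⁰₀₀ = 0; Γ̂⁰₀β = Γ̂⁰_{β0} = 0; Γ̂⁰_{αβ} = 2(k_{αβ} − r ∂_r k_{αβ}); Γ̂^γ₀₀ = 0; Γ̂^γ₀β = Γ̂^γ_{β0} = ½ Σ_δ k^{γδ} ∂_r k_{δβ};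 and Γ̂^γ_{αβ} = ½ Σ_δ k^{γδ}(∂_α k_{βδ} + ∂_β k_{αδ} − ∂_δ k_{αβ}). In particular, all Γ̂ᵏᵢⱼ extend smoothly to r = 0. -/
/-!
The metric is block diagonal, with inverse `g⁰⁰ = 4r²`, `g^{αβ} = r k^{αβ}`, so every `Γᵏᵢⱼ` is
an explicit expression in `r`, `k`, `k⁻¹` and first derivatives of `k`. Only two of them are
singular at `r = 0`: `Γ⁰₀₀ = -1/r`, from `∂_r (1/(4r²))`, and the term `-δ^γ_β/(2r)` of
`Γ^γ₀β`, from `∂_r (k/r)`. The projective correction by `v = dr/r` cancels exactly these, and what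
remains is smooth on all of `ℝ × ℝⁿ` because `k⁻¹ = adj k / det k` with `det k > 0`.
-/

/-- The coordinate direction vectors in `ℝ × ℝⁿ`: index `0` is the `r`-direction,
index `α.succ` is the `s^α`-direction. -/
noncomputable def coordDir (n : ℕ) (i : Fin (n + 1)) : ℝ × (Fin n → ℝ) :=
  Fin.cases ((1 : ℝ), (0 : Fin n → ℝ)) (fun α => ((0 : ℝ), Pi.single α (1 : ℝ))) i

/-- Partial derivative `∂ᵢ F` of a scalar function on `ℝ × ℝⁿ`. -/
noncomputable def pd (n : ℕ) (i : Fin (n + 1)) (F : ℝ × (Fin n → ℝ) → ℝ)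
    (z : ℝ × (Fin n → ℝ)) : ℝ :=
  fderiv ℝ F z (coordDir n i)

/-- The components of the metric `g = dr²/(4r²) + k_r/r`:
`g₀₀ = 1/(4r²)`, `g₀β = g_{β0} = 0`, `g_{αβ} = k_{αβ}/r`. -/
noncomputable def gMet (n : ℕ) (k : ℝ × (Fin n → ℝ) → Fin n → Fin n → ℝ)
    (z : ℝ × (Fin n → ℝ)) : Fin (n + 1) → Fin (n + 1) → ℝ :=
  fun i => Fin.cases (motive := fun _ => Fin (n + 1) → ℝ)
    (fun j => Fin.cases (1 / (4 * z.1 ^ 2)) (fun _ => (0 : ℝ)) j)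
    (fun α j => Fin.cases (0 : ℝ) (fun β => k z α β / z.1) j) i

/-- Christoffel symbols `Γᵏᵢⱼ = ½ Σ_l gᵏˡ(∂ᵢ g_{jl} + ∂ⱼ g_{il} − ∂_l g_{ij})`
of the metric `gMet`. -/
noncomputable def christoffel (n : ℕ) (k : ℝ × (Fin n → ℝ) → Fin n → Fin n → ℝ)
    (z : ℝ × (Fin n → ℝ)) (a i j : Fin (n + 1)) : ℝ :=
  (1 / 2) * ∑ l : Fin (n + 1), ((Matrix.of (gMet n k z))⁻¹ a l) *
    (pd n i (fun w => gMet n k w j l) z + pd n j (fun w => gMet n k w i l) z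
      - pd n l (fun w => gMet n k w i j) z)

/-- The projectively changed connection
`Γ̂ᵏᵢⱼ = Γᵏᵢⱼ + ½(vᵢ δᵏⱼ + vⱼ δᵏᵢ)` with `v₀ = 1/r`, `v_α = 0`. -/
noncomputable def christoffelHat (n : ℕ) (k : ℝ × (Fin n → ℝ) → Fin n → Fin n → ℝ)
    (z : ℝ × (Fin n → ℝ)) (a i j : Fin (n + 1)) : ℝ :=
  christoffel n k z a i j +
    (1 / 2) * ((Fin.cases (1 / z.1) (fun _ => (0 : ℝ)) i) * (if a = j then 1 else 0) +
      (Fin.cases (1 / z.1) (fun _ => (0 : ℝ)) j) * (if a = i then 1 else 0))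

section MatrixSmooth

variable {E : Type*} [NormedAddCommGroup E] [NormedSpace ℝ E] {N : WithTop ℕ∞}
  {m : Type*} [Fintype m] [DecidableEq m] {M : E → Matrix m m ℝ}

theorem contDiff_matrix_det (hM : ∀ a b, ContDiff ℝ N fun x => M x a b) :
    ContDiff ℝ N fun x => (M x).det := by
  simp only [Matrix.det_apply]
  exact ContDiff.sum fun σ _ => (contDiff_prod fun i _ => hM _ _).const_smul _

theorem contDiff_matrix_inv_apply (hM : ∀ a b, ContDiff ℝ N fun x => M x a b)
    (hdet : ∀ x, (M x).det ≠ 0) (a b : m) : ContDiff ℝ N fun x => (M x)⁻¹ a b := by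
  have hadj : ContDiff ℝ N fun x => (M x).adjugate a b := by
    simp only [Matrix.adjugate_apply]
    refine contDiff_matrix_det fun c d => ?_
    by_cases hcb : c = b
    · simp only [hcb, Matrix.updateRow_self]
      exact contDiff_const
    · simpa only [Matrix.updateRow_ne hcb] using hM c d
  simp only [Matrix.inv_def, Ring.inverse_eq_inv', Matrix.smul_apply, smul_eq_mul]
  exact ((contDiff_matrix_det hM).inv hdet).mul hadj

end MatrixSmooth

namespace ProjectiveCompactMetric

variable {n : ℕ} {k : ℝ × (Fin n → ℝ) → Fin n → Fin n → ℝ} {z : ℝ × (Fin n → ℝ)}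

theorem pd_const (i : Fin (n + 1)) (c : ℝ) : pd n i (fun _ => c) z = 0 := by
  simp [pd]

theorem pd_comp_fst {f : ℝ → ℝ} {f' : ℝ} (hf : HasDerivAt f f' z.1) (i : Fin (n + 1)) :
    pd n i (fun w => f w.1) z = (coordDir n i).1 * f' := by
  rw [pd, HasFDerivAt.fderiv (f := fun w : ℝ × (Fin n → ℝ) => f w.1)
    ((hasDerivAt_iff_hasFDerivAt.1 hf).comp z hasFDerivAt_fst)]
  simp [mul_comm]

theorem pd_div_fst {F : ℝ × (Fin n → ℝ) → ℝ} (hF : DifferentiableAt ℝ F z) (hr : z.1 ≠ 0)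
    (i : Fin (n + 1)) :
    pd n i (fun w => F w / w.1) z = pd n i F z / z.1 - F z * (coordDir n i).1 / z.1 ^ 2 := by
  have hinv : HasFDerivAt (fun w : ℝ × (Fin n → ℝ) => w.1⁻¹)
      ((ContinuousLinearMap.smulRight (1 : ℝ →L[ℝ] ℝ) (-(z.1 ^ 2)⁻¹)).comp
        (ContinuousLinearMap.fst ℝ ℝ (Fin n → ℝ))) z :=
    (hasDerivAt_iff_hasFDerivAt.1 (hasDerivAt_inv hr)).comp z hasFDerivAt_fst
  rw [pd, show (fun w => F w / w.1) = fun w => F w * w.1⁻¹ from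
      funext fun _ => div_eq_mul_inv _ _,
    HasFDerivAt.fderiv (f := fun w => F w * w.1⁻¹) (hF.hasFDerivAt.mul hinv), pd]
  simp only [add_apply, smul_apply, ContinuousLinearMap.comp_apply,
    ContinuousLinearMap.coe_fst', ContinuousLinearMap.smulRight_apply, one_apply_eq_self,
    smul_eq_mul, mul_neg]
  ring

theorem contDiff_pd {N : WithTop ℕ∞} {F : ℝ × (Fin n → ℝ) → ℝ} (hF : ContDiff ℝ (N + 1) F)
    (i : Fin (n + 1)) : ContDiff ℝ N (pd n i F) :=
  (hF.fderiv_right le_rfl).clm_apply contDiff_const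

@[simp] theorem coordDir_zero_fst : (coordDir n 0).1 = 1 := rfl

@[simp] theorem coordDir_succ_fst (α : Fin n) : (coordDir n α.succ).1 = 0 := rfl

theorem gMet_zero_zero : gMet n k z 0 0 = 1 / (4 * z.1 ^ 2) := rfl

theorem gMet_zero_succ (β : Fin n) : gMet n k z 0 β.succ = 0 := rfl

theorem gMet_succ_zero (α : Fin n) : gMet n k z α.succ 0 = 0 := rfl

theorem gMet_succ_succ (α β : Fin n) : gMet n k z α.succ β.succ = k z α β / z.1 := rfl

theorem gMet_comm (hksym : ∀ α β, k z α β = k z β α) (i j : Fin (n + 1)) :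
    gMet n k z i j = gMet n k z j i := by
  cases i using Fin.cases <;> cases j using Fin.cases <;> simp [gMet, hksym]

noncomputable def gMetInv (n : ℕ) (k : ℝ × (Fin n → ℝ) → Fin n → Fin n → ℝ)
    (z : ℝ × (Fin n → ℝ)) : Matrix (Fin (n + 1)) (Fin (n + 1)) ℝ :=
  Matrix.of fun i j => Fin.cases (motive := fun _ => ℝ)
    (Fin.cases (4 * z.1 ^ 2) (fun _ => 0) j)
    (fun α => Fin.cases 0 (fun β => z.1 * (Matrix.of (k z))⁻¹ α β) j) i

theorem inv_gMet (hr : z.1 ≠ 0) (hdet : IsUnit (Matrix.of (k z)).det) :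
    (Matrix.of (gMet n k z))⁻¹ = gMetInv n k z := by
  refine Matrix.inv_eq_right_inv ?_
  have hkk := Matrix.mul_nonsing_inv _ hdet
  ext i j
  cases i using Fin.cases <;> cases j using Fin.cases
  · simp only [gMetInv, Matrix.mul_apply, Matrix.of_apply, Fin.sum_univ_succ, gMet_zero_zero,
      gMet_zero_succ, Fin.cases_zero, Fin.cases_succ, mul_zero, Finset.sum_const_zero, add_zero,
      Matrix.one_apply_eq]
    field_simp
  · simp [Matrix.mul_apply, Fin.sum_univ_succ, gMetInv, gMet_zero_succ, Matrix.one_apply_ne']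
  · simp [Matrix.mul_apply, Fin.sum_univ_succ, gMetInv, gMet_succ_zero, Matrix.one_apply_ne]
  case succ.succ α β =>
    simp only [Matrix.mul_apply, Fin.sum_univ_succ, gMetInv, Matrix.of_apply, gMet_succ_zero,
      gMet_succ_succ, Fin.cases_zero, Fin.cases_succ, zero_mul, zero_add, Matrix.one_apply,
      Fin.succ_inj]
    rw [← Matrix.one_apply, ← hkk, Matrix.mul_apply]
    exact Finset.sum_congr rfl fun d _ => by simp only [Matrix.of_apply]; field_simp

theorem christoffel_zero (hr : z.1 ≠ 0) (hdet : IsUnit (Matrix.of (k z)).det)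
    (i j : Fin (n + 1)) :
    christoffel n k z 0 i j = 2 * z.1 ^ 2 * (pd n i (fun w => gMet n k w j 0) z
      + pd n j (fun w => gMet n k w i 0) z - pd n 0 (fun w => gMet n k w i j) z) := by
  simp only [christoffel, inv_gMet hr hdet, gMetInv, Matrix.of_apply, Fin.sum_univ_succ,
    Fin.cases_zero, Fin.cases_succ, zero_mul, Finset.sum_const_zero, add_zero]
  ring

theorem christoffel_succ (hr : z.1 ≠ 0) (hdet : IsUnit (Matrix.of (k z)).det)
    (c : Fin n) (i j : Fin (n + 1)) :
    christoffel n k z c.succ i j = z.1 / 2 * ∑ d, (Matrix.of (k z))⁻¹ c d *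
      (pd n i (fun w => gMet n k w j d.succ) z + pd n j (fun w => gMet n k w i d.succ) z
        - pd n d.succ (fun w => gMet n k w i j) z) := by
  simp only [christoffel, inv_gMet hr hdet, gMetInv, Matrix.of_apply, Fin.sum_univ_succ,
    Fin.cases_zero, Fin.cases_succ, zero_mul, zero_add, Finset.mul_sum]
  exact Finset.sum_congr rfl fun d _ => by ring

theorem pd_gMet_zero_zero (hr : z.1 ≠ 0) (i : Fin (n + 1)) :
    pd n i (fun w => gMet n k w 0 0) z = -(coordDir n i).1 / (2 * z.1 ^ 3) := by
  have hf : HasDerivAt (fun r : ℝ => 1 / (4 * r ^ 2)) (-1 / (2 * z.1 ^ 3)) z.1 := by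
    simpa only [one_div] using (((hasDerivAt_pow 2 z.1).const_mul (4 : ℝ)).fun_inv
      (by positivity)).congr_deriv (by field_simp; ring)
  exact (pd_comp_fst hf i).trans (by ring)

theorem pd_gMet_zero_succ (i : Fin (n + 1)) (β : Fin n) :
    pd n i (fun w => gMet n k w 0 β.succ) z = 0 :=
  pd_const i 0

theorem pd_gMet_succ_zero (i : Fin (n + 1)) (α : Fin n) :
    pd n i (fun w => gMet n k w α.succ 0) z = 0 :=
  pd_const i 0

theorem pd_gMet_succ_succ (hr : z.1 ≠ 0) (hdk : ∀ α β, DifferentiableAt ℝ (fun w => k w α β) z)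
    (i : Fin (n + 1)) (α β : Fin n) :
    pd n i (fun w => gMet n k w α.succ β.succ) z
      = pd n i (fun w => k w α β) z / z.1 - k z α β * (coordDir n i).1 / z.1 ^ 2 :=
  pd_div_fst (hdk α β) hr i

theorem christoffelHat_comm (hksym : ∀ w, ∀ α β, k w α β = k w β α) (a i j : Fin (n + 1)) :
    christoffelHat n k z a i j = christoffelHat n k z a j i := by
  have hg : (fun w => gMet n k w i j) = fun w => gMet n k w j i :=
    funext fun w => gMet_comm (hksym w) i j
  simp only [christoffelHat, christoffel, hg]
  congr 1
  · congr 1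
    exact Finset.sum_congr rfl fun l _ => by ring
  · ring

section Components

variable (hr : z.1 ≠ 0) (hdet : IsUnit (Matrix.of (k z)).det)
  (hdk : ∀ α β, DifferentiableAt ℝ (fun w => k w α β) z)
include hr hdet

theorem christoffelHat_zero_zero_zero : christoffelHat n k z 0 0 0 = 0 := by
  simp only [christoffelHat, christoffel_zero hr hdet, pd_gMet_zero_zero hr, coordDir_zero_fst,
    add_sub_cancel_right, Fin.cases_zero, ↓reduceIte, mul_one]
  field_simp
  ring

theorem christoffelHat_zero_zero_succ (β : Fin n) : christoffelHat n k z 0 0 β.succ = 0 := by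
  simp [christoffelHat, christoffel_zero hr hdet, pd_gMet_zero_zero hr, pd_gMet_succ_zero,
    pd_gMet_zero_succ, (Fin.succ_ne_zero β).symm]

theorem christoffelHat_succ_zero_zero (c : Fin n) : christoffelHat n k z c.succ 0 0 = 0 := by
  simp [christoffelHat, christoffel_succ hr hdet, pd_gMet_zero_succ, pd_gMet_zero_zero hr]

include hdk

theorem christoffelHat_zero_succ_succ (α β : Fin n) :
    christoffelHat n k z 0 α.succ β.succ = 2 * (k z α β - z.1 * pd n 0 (fun w => k w α β) z) := by
  simp only [christoffelHat, christoffel_zero hr hdet, pd_gMet_succ_zero, pd_gMet_succ_succ hr hdk,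
    coordDir_zero_fst, Fin.cases_succ, add_zero, zero_sub, neg_sub, mul_one, mul_zero, zero_mul]
  field_simp

theorem christoffelHat_succ_succ_succ (c α β : Fin n) :
    christoffelHat n k z c.succ α.succ β.succ =
      (1 / 2) * ∑ d : Fin n, (Matrix.of (k z))⁻¹ c d *
        (pd n α.succ (fun w => k w β d) z + pd n β.succ (fun w => k w α d) z
          - pd n d.succ (fun w => k w α β) z) := by
  simp only [christoffelHat, christoffel_succ hr hdet, pd_gMet_succ_succ hr hdk, coordDir_succ_fst,
    mul_zero, zero_div, sub_zero, Finset.mul_sum, Fin.cases_succ, zero_mul, add_zero]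
  refine Finset.sum_congr rfl fun d _ => ?_
  field_simp

theorem christoffelHat_succ_zero_succ (hksym : ∀ w, ∀ α β, k w α β = k w β α) (c β : Fin n) :
    christoffelHat n k z c.succ 0 β.succ =
      (1 / 2) * ∑ d : Fin n, (Matrix.of (k z))⁻¹ c d * pd n 0 (fun w => k w d β) z := by
  have hinv : ∑ d, (Matrix.of (k z))⁻¹ c d * k z d β = if c = β then 1 else 0 := by
    simpa [Matrix.mul_apply, Matrix.one_apply] using
      congrFun (congrFun (Matrix.nonsing_inv_mul _ hdet) c) β
  simp only [christoffelHat, christoffel_succ hr hdet, pd_gMet_succ_succ hr hdk, hksym _ β,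
    coordDir_zero_fst, mul_one, pd_gMet_zero_succ, add_zero, sub_zero, Fin.cases_zero,
    Fin.cases_succ, Fin.succ_inj, (Fin.succ_ne_zero c), if_false, mul_zero]
  simp only [mul_sub, Finset.sum_sub_distrib, mul_div_assoc', ← Finset.sum_div, hinv]
  split_ifs <;> field_simp <;> ring

end Components

/-- Defined for every `r`, this is the smooth extension of `christoffelHat` across `r = 0`. -/
noncomputable def christoffelHatFormula (n : ℕ) (k : ℝ × (Fin n → ℝ) → Fin n → Fin n → ℝ)
    (z : ℝ × (Fin n → ℝ)) (a i j : Fin (n + 1)) : ℝ :=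
  Fin.cases (motive := fun _ => ℝ)
    (Fin.cases (motive := fun _ => ℝ) 0
      (fun α => Fin.cases (motive := fun _ => ℝ) 0
        (fun β => 2 * (k z α β - z.1 * pd n 0 (fun w => k w α β) z)) j) i)
    (fun c => Fin.cases (motive := fun _ => ℝ)
      (Fin.cases (motive := fun _ => ℝ) 0
        (fun β => (1 / 2) * ∑ d, (Matrix.of (k z))⁻¹ c d * pd n 0 (fun w => k w d β) z) j)
      (fun α => Fin.cases (motive := fun _ => ℝ)
        ((1 / 2) * ∑ d, (Matrix.of (k z))⁻¹ c d * pd n 0 (fun w => k w d α) z)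
        (fun β => (1 / 2) * ∑ d, (Matrix.of (k z))⁻¹ c d *
          (pd n α.succ (fun w => k w β d) z + pd n β.succ (fun w => k w α d) z
            - pd n d.succ (fun w => k w α β) z)) j) i) a

theorem christoffelHat_eq_formula (hr : z.1 ≠ 0) (hdet : IsUnit (Matrix.of (k z)).det)
    (hdk : ∀ α β, DifferentiableAt ℝ (fun w => k w α β) z)
    (hksym : ∀ w, ∀ α β, k w α β = k w β α) (a i j : Fin (n + 1)) :
    christoffelHat n k z a i j = christoffelHatFormula n k z a i j := by
  cases a using Fin.cases <;> cases i using Fin.cases <;> cases j using Fin.cases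
  · exact christoffelHat_zero_zero_zero hr hdet
  · exact christoffelHat_zero_zero_succ hr hdet _
  · exact (christoffelHat_comm hksym _ _ _).trans (christoffelHat_zero_zero_succ hr hdet _)
  · exact christoffelHat_zero_succ_succ hr hdet hdk _ _
  · exact christoffelHat_succ_zero_zero hr hdet _
  · exact christoffelHat_succ_zero_succ hr hdet hdk hksym _ _
  · exact (christoffelHat_comm hksym _ _ _).trans
      (christoffelHat_succ_zero_succ hr hdet hdk hksym _ _)
  · exact christoffelHat_succ_succ_succ hr hdet hdk _ _ _

theorem contDiff_christoffelHatFormula {N : WithTop ℕ∞}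
    (hk : ∀ α β, ContDiff ℝ (N + 1) fun z => k z α β) (hdet : ∀ z, (Matrix.of (k z)).det ≠ 0)
    (a i j : Fin (n + 1)) : ContDiff ℝ N fun z => christoffelHatFormula n k z a i j := by
  have hk' α β : ContDiff ℝ N fun z => k z α β := (hk α β).of_le le_self_add
  have hinv := contDiff_matrix_inv_apply (M := fun z => Matrix.of (k z)) hk' hdet
  have hpd i α β := contDiff_pd (hk α β) i
  cases a using Fin.cases <;> cases i using Fin.cases <;> cases j using Fin.cases <;>
    simp only [christoffelHatFormula, Fin.cases_zero, Fin.cases_succ]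
  all_goals first
    | exact contDiff_const
    | exact contDiff_const.mul ((hk' _ _).sub (contDiff_fst.mul (hpd _ _ _)))
    | exact contDiff_const.mul (ContDiff.sum fun d _ => (hinv _ d).mul (hpd _ _ _))
    | exact contDiff_const.mul (ContDiff.sum fun d _ => (hinv _ d).mul
        (((hpd _ _ _).add (hpd _ _ _)).sub (hpd _ _ _)))

end ProjectiveCompactMetric

open ProjectiveCompactMetric in
theorem stmt_8_general (n : ℕ)
    (k : ℝ × (Fin n → ℝ) → Fin n → Fin n → ℝ)
    (hk : ∀ α β : Fin n, ContDiff ℝ (⊤ : ℕ∞) fun z => k z α β)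
    (hksym : ∀ z, ∀ α β : Fin n, k z α β = k z β α)
    (hkpos : ∀ z, (Matrix.of (k z)).PosDef) :
    (∀ z : ℝ × (Fin n → ℝ), 0 < z.1 →
      (christoffelHat n k z 0 0 0 = 0) ∧
      (∀ β : Fin n, christoffelHat n k z 0 0 β.succ = 0 ∧
        christoffelHat n k z 0 β.succ 0 = 0) ∧
      (∀ α β : Fin n, christoffelHat n k z 0 α.succ β.succ =
        2 * (k z α β - z.1 * pd n 0 (fun w => k w α β) z)) ∧
      (∀ c : Fin n, christoffelHat n k z c.succ 0 0 = 0) ∧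
      (∀ c β : Fin n,
        christoffelHat n k z c.succ 0 β.succ =
          (1 / 2) * ∑ d : Fin n, (Matrix.of (k z))⁻¹ c d * pd n 0 (fun w => k w d β) z ∧
        christoffelHat n k z c.succ β.succ 0 =
          (1 / 2) * ∑ d : Fin n, (Matrix.of (k z))⁻¹ c d * pd n 0 (fun w => k w d β) z) ∧
      (∀ c α β : Fin n, christoffelHat n k z c.succ α.succ β.succ =
        (1 / 2) * ∑ d : Fin n, (Matrix.of (k z))⁻¹ c d *
          (pd n α.succ (fun w => k w β d) z + pd n β.succ (fun w => k w α d) z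
            - pd n d.succ (fun w => k w α β) z))) ∧
    ∃ Γext : (ℝ × (Fin n → ℝ)) → Fin (n + 1) → Fin (n + 1) → Fin (n + 1) → ℝ,
      (∀ a i j : Fin (n + 1), ContDiff ℝ (⊤ : ℕ∞) fun z => Γext z a i j) ∧
      ∀ z : ℝ × (Fin n → ℝ), 0 < z.1 →
        ∀ a i j : Fin (n + 1), Γext z a i j = christoffelHat n k z a i j := by
  have hdet z : (Matrix.of (k z)).det ≠ 0 := (hkpos z).det_pos.ne'
  have hdk z α β : DifferentiableAt ℝ (fun w => k w α β) z :=
    ((hk α β).differentiable (by simp)).differentiableAt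
  have heq z (hz : 0 < z.1) := christoffelHat_eq_formula hz.ne' (hdet z).isUnit (hdk z) hksym
  refine ⟨fun z hz => ?_, christoffelHatFormula n k, contDiff_christoffelHatFormula ?_ hdet,
    fun z hz a i j => (heq z hz a i j).symm⟩
  · simp only [heq z hz]
    simp [christoffelHatFormula]
  · simpa using hk

/-- For a smooth symmetric positive definite `k`, the connection
coefficients `Γ̂ᵏᵢⱼ` of the projective change of the Levi-Civita connection of
`g = dr²/(4r²) + k_r/r` by `v = dr/r` are given, for `r > 0`, by the explicit
formulas of the paper, and in particular extend smoothly to `r = 0`. -/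
theorem stmt_8 (n : ℕ) (hn : 1 ≤ n)
    (k : ℝ × (Fin n → ℝ) → Fin n → Fin n → ℝ)
    (hk : ∀ α β : Fin n, ContDiff ℝ (⊤ : ℕ∞) fun z => k z α β)
    (hksym : ∀ z, ∀ α β : Fin n, k z α β = k z β α)
    (hkpos : ∀ z, (Matrix.of (k z)).PosDef) :
    (∀ z : ℝ × (Fin n → ℝ), 0 < z.1 →
      (christoffelHat n k z 0 0 0 = 0) ∧
      (∀ β : Fin n, christoffelHat n k z 0 0 β.succ = 0 ∧
        christoffelHat n k z 0 β.succ 0 = 0) ∧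
      (∀ α β : Fin n, christoffelHat n k z 0 α.succ β.succ =
        2 * (k z α β - z.1 * pd n 0 (fun w => k w α β) z)) ∧
      (∀ c : Fin n, christoffelHat n k z c.succ 0 0 = 0) ∧
      (∀ c β : Fin n,
        christoffelHat n k z c.succ 0 β.succ =
          (1 / 2) * ∑ d : Fin n, (Matrix.of (k z))⁻¹ c d * pd n 0 (fun w => k w d β) z ∧
        christoffelHat n k z c.succ β.succ 0 =
          (1 / 2) * ∑ d : Fin n, (Matrix.of (k z))⁻¹ c d * pd n 0 (fun w => k w d β) z) ∧
      (∀ c α β : Fin n, christoffelHat n k z c.succ α.succ β.succ =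
        (1 / 2) * ∑ d : Fin n, (Matrix.of (k z))⁻¹ c d *
          (pd n α.succ (fun w => k w β d) z + pd n β.succ (fun w => k w α d) z
            - pd n d.succ (fun w => k w α β) z))) ∧
    ∃ Γext : (ℝ × (Fin n → ℝ)) → Fin (n + 1) → Fin (n + 1) → Fin (n + 1) → ℝ,
      (∀ a i j : Fin (n + 1), ContDiff ℝ (⊤ : ℕ∞) fun z => Γext z a i j) ∧
      ∀ z : ℝ × (Fin n → ℝ), 0 < z.1 →
        ∀ a i j : Fin (n + 1), Γext z a i j = christoffelHat n k z a i j :=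
  stmt_8_general n k hk hksym hkpos
end

section
/- Let n ≥ 1, let Ω ⊆ ℝ^{1+n} be an open set containing a point z₀ with z₀⁰ = 0, and let Γ̂ᵏᵢⱼ : Ω → ℝ (0 ≤ i,j,k ≤ n) be continuous functions, symmetric in (i,j), such that Γ̂⁰₀₀ ≡ 0, Γ̂⁰₀β = Γ̂⁰_{β0} ≡ 0 for all 1 ≤ β ≤ n, and such that there is a continuous symmetric positive definite matrix-valued function k_{αβ} with Γ̂⁰_{αβ}(z) = 2 k_{αβ}(z) for all z with z⁰ = 0. Let γ : (−ε, ε) → Ω be a Γ̂-geodesic with γ⁰(0) = 0, (γ⁰)′(0) = 0, and γ′(0) ≠ 0. Then (γ⁰)″(0) < 0. -/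
/-!
At `t = 0` the velocity `w = γ'(0)` has `w⁰ = 0`, so the geodesic equation for `γ⁰` only sees
the tangential block `Γ̂⁰_{αβ} = 2 k_{αβ}` of the connection: `(γ⁰)″(0) = -2 k(w', w')`, where
`w' = (w¹, …, wⁿ) ≠ 0`, and positive definiteness of `k` makes this negative.
-/

open Finset

theorem Matrix.PosDef.sum_sum_mul_mul_pos {ι : Type*} [Fintype ι] {K : Matrix ι ι ℝ}
    (hK : K.PosDef) {v : ι → ℝ} (hv : v ≠ 0) :
    0 < ∑ α, ∑ β, K α β * v α * v β := by
  have hquad := hK.dotProduct_mulVec_pos hv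
  simp only [dotProduct, Matrix.mulVec, Pi.star_apply, star_trivial, mul_sum] at hquad
  simpa only [mul_left_comm, mul_comm] using hquad

theorem Fin.sum_sum_mul_mul_of_apply_zero_eq_zero {R : Type*} [NonUnitalNonAssocSemiring R]
    {n : ℕ} (Q : Fin (n + 1) → Fin (n + 1) → R) {w : Fin (n + 1) → R} (hw : w 0 = 0) :
    ∑ i, ∑ j, Q i j * w i * w j = ∑ α : Fin n, ∑ β : Fin n, Q α.succ β.succ * w α.succ * w β.succ := by
  simp only [Fin.sum_univ_succ, hw, mul_zero, zero_mul, sum_const_zero, zero_add]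

theorem Fin.tail_ne_zero_of_apply_zero_eq_zero {M : Type*} [Zero M] {n : ℕ}
    {w : Fin (n + 1) → M} (hw : w ≠ 0) (hw0 : w 0 = 0) : Fin.tail w ≠ 0 := by
  contrapose! hw
  ext i
  cases i using Fin.cases with
  | zero => exact hw0
  | succ α => exact congrFun hw α

theorem stmt_9_general (n : ℕ)
    (Ω : Set (Fin (n + 1) → ℝ))
    (Γ : (Fin (n + 1) → ℝ) → Fin (n + 1) → Fin (n + 1) → Fin (n + 1) → ℝ)
    (kmat : (Fin (n + 1) → ℝ) → Matrix (Fin n) (Fin n) ℝ)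
    (hkpos : ∀ z ∈ Ω, (kmat z).PosDef)
    (hbdry : ∀ z ∈ Ω, z 0 = 0 →
      ∀ α β : Fin n, Γ z 0 α.succ β.succ = 2 * kmat z α β)
    (ε : ℝ) (hε : 0 < ε) (γ : ℝ → Fin (n + 1) → ℝ)
    (hγΩ : ∀ t ∈ Set.Ioo (-ε) ε, γ t ∈ Ω)
    (hgeo : ∀ t ∈ Set.Ioo (-ε) ε, ∀ a : Fin (n + 1),
      deriv (deriv fun t' => γ t' a) t =
        -∑ i : Fin (n + 1), ∑ j : Fin (n + 1),
          Γ (γ t) a i j * deriv (fun t' => γ t' i) t * deriv (fun t' => γ t' j) t)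
    (hstart : γ 0 0 = 0)
    (htangent : deriv (fun t => γ t 0) 0 = 0)
    (hvel : deriv γ 0 ≠ 0) :
    deriv (deriv fun t => γ t 0) 0 < 0 := by
  have h0 : (0 : ℝ) ∈ Set.Ioo (-ε) ε := ⟨by linarith, hε⟩
  have hγ0 : γ 0 ∈ Ω := hγΩ 0 h0
  -- a non-differentiable `γ` would have junk derivative `0`
  have hdiff : DifferentiableAt ℝ γ 0 := by
    by_contra h
    exact hvel (deriv_zero_of_not_differentiableAt h)
  set w := deriv γ 0
  have hcoord : ∀ i, deriv (fun t => γ t i) 0 = w i := fun i =>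
    (hasDerivAt_pi.mp hdiff.hasDerivAt i).deriv
  have hw0 : w 0 = 0 := (hcoord 0).symm.trans htangent
  have hpos := (hkpos (γ 0) hγ0).sum_sum_mul_mul_pos
    (Fin.tail_ne_zero_of_apply_zero_eq_zero hvel hw0)
  rw [hgeo 0 h0 0]
  simp only [hcoord, Fin.sum_sum_mul_mul_of_apply_zero_eq_zero _ hw0,
    hbdry (γ 0) hγ0 hstart]
  simp only [Fin.tail, mul_assoc, ← mul_sum] at hpos ⊢
  linarith

/-- (Strict convexity of the boundary.) If `Γ̂` is a continuous
symmetric connection on an open set `Ω ⊆ ℝ^{1+n}` with `Γ̂⁰₀₀ ≡ 0`, `Γ̂⁰₀β ≡ 0`,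
and `Γ̂⁰_{αβ} = 2k_{αβ}` on `{z⁰ = 0}` for a continuous symmetric positive definite
`k`, then any `Γ̂`-geodesic tangent to `{z⁰ = 0}` at `t = 0` with nonzero velocity
satisfies `(γ⁰)″(0) < 0`. -/
theorem stmt_9 (n : ℕ) (hn : 1 ≤ n)
    (Ω : Set (Fin (n + 1) → ℝ)) (hΩ : IsOpen Ω)
    (z₀ : Fin (n + 1) → ℝ) (hz₀ : z₀ ∈ Ω) (hz₀0 : z₀ 0 = 0)
    (Γ : (Fin (n + 1) → ℝ) → Fin (n + 1) → Fin (n + 1) → Fin (n + 1) → ℝ)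
    (hcont : ∀ a i j : Fin (n + 1), ContinuousOn (fun z => Γ z a i j) Ω)
    (hsym : ∀ z, ∀ a i j : Fin (n + 1), Γ z a i j = Γ z a j i)
    (h000 : ∀ z ∈ Ω, Γ z 0 0 0 = 0)
    (h00β : ∀ z ∈ Ω, ∀ β : Fin n, Γ z 0 0 β.succ = 0 ∧ Γ z 0 β.succ 0 = 0)
    (kmat : (Fin (n + 1) → ℝ) → Matrix (Fin n) (Fin n) ℝ)
    (hkcont : ∀ α β : Fin n, ContinuousOn (fun z => kmat z α β) Ω)
    (hksym : ∀ z ∈ Ω, (kmat z).IsSymm)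
    (hkpos : ∀ z ∈ Ω, (kmat z).PosDef)
    (hbdry : ∀ z ∈ Ω, z 0 = 0 →
      ∀ α β : Fin n, Γ z 0 α.succ β.succ = 2 * kmat z α β)
    (ε : ℝ) (hε : 0 < ε) (γ : ℝ → Fin (n + 1) → ℝ)
    (hγΩ : ∀ t ∈ Set.Ioo (-ε) ε, γ t ∈ Ω)
    (hγC2 : ContDiffOn ℝ 2 γ (Set.Ioo (-ε) ε))
    (hgeo : ∀ t ∈ Set.Ioo (-ε) ε, ∀ a : Fin (n + 1),
      deriv (deriv fun t' => γ t' a) t =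
        -∑ i : Fin (n + 1), ∑ j : Fin (n + 1),
          Γ (γ t) a i j * deriv (fun t' => γ t' i) t * deriv (fun t' => γ t' j) t)
    (hstart : γ 0 0 = 0)
    (htangent : deriv (fun t => γ t 0) 0 = 0)
    (hvel : deriv γ 0 ≠ 0) :
    deriv (deriv fun t => γ t 0) 0 < 0 :=
  stmt_9_general n Ω Γ kmat hkpos hbdry ε hε γ hγΩ hgeo hstart htangent hvel
end

section
/- Let m ≥ 1, let Ω ⊆ ℝ^m be open and convex, and let E : Ω × Ω → ℝ^m be of class C² with E(z,z) = 0 for all z ∈ Ω and with the differential of E(z,·) at z equal to the identity for every z ∈ Ω. Then there exists a continuously differentiable map G : Ω × Ω → ℝ^{m×m} taking values in symmetric positive semidefinite matrices such that |E(z, z̃)|² = ⟨G(z, z̃)(z̃ − z), z̃ − z⟩ for all z, z̃ ∈ Ω, G(z,z) is the identity matrix for every z, and for every z₀ ∈ Ω there is a neighborhood of (z₀, z₀) in Ω × Ω on which G(z, z̃) is positive definite. -/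
/-!
By Hadamard's lemma, `E(z, z̃) = E(z, z̃) - E(z, z) = A(z, z̃) (z̃ - z)` with
`A(z, z̃) = ∫₀¹ ∂₂E(z, z + t (z̃ - z)) dt`, and `A` is `C¹` because its integrand is, uniformly
on the compact parameter interval. Then `G = Aᵀ A` works: `A(z, z) = ∂₂E(z, z) = 1`, and since
invertibility of `A` is an open condition, `G` stays positive definite near the diagonal.
-/

open Set Filter Topology MeasureTheory Function Matrix
open scoped Interval

section SliceIntegrability

variable {X G : Type*} [TopologicalSpace X] [NormedAddCommGroup G] {W : Set (X × ℝ)} {a b : ℝ}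

theorem ContinuousOn.intervalIntegrable_slice
    {g : X → ℝ → G} (hg : ContinuousOn (uncurry g) W) {x : X} (hx : ∀ t ∈ [[a, b]], (x, t) ∈ W) :
    IntervalIntegrable (g x) volume a b :=
  (hg.comp (Continuous.prodMk_right x).continuousOn hx).intervalIntegrable

theorem ContinuousOn.aestronglyMeasurable_slice
    {g : X → ℝ → G} (hg : ContinuousOn (uncurry g) W) {x : X} (hx : ∀ t ∈ [[a, b]], (x, t) ∈ W) :
    AEStronglyMeasurable (g x) (volume.restrict (Ι a b)) :=
  ((hg.comp (Continuous.prodMk_right x).continuousOn hx).mono uIoc_subset_uIcc)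
    |>.aestronglyMeasurable measurableSet_uIoc

end SliceIntegrability

section ParametricIntegral

variable {H F : Type*} [NormedAddCommGroup H] [NormedSpace ℝ H]
  [NormedAddCommGroup F] [NormedSpace ℝ F] {W : Set (H × ℝ)} {a b : ℝ}

theorem contDiffAt_one_intervalIntegral [CompleteSpace F] {f : H → ℝ → F} (hW : IsOpen W)
    (hf : ContDiffOn ℝ 1 (uncurry f) W) {x₀ : H} (hx₀ : ∀ t ∈ [[a, b]], (x₀, t) ∈ W) :
    ContDiffAt ℝ 1 (fun x => ∫ t in a..b, f x t) x₀ := by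
  set f' : H → ℝ → H →L[ℝ] F := fun x t =>
    (fderiv ℝ (uncurry f) (x, t)).comp (ContinuousLinearMap.inl ℝ H ℝ)
  have hf'c : ContinuousOn (uncurry f') W :=
    (hf.continuousOn_fderiv_of_isOpen hW le_rfl).clm_comp continuousOn_const
  have hdiff : ∀ x t, (x, t) ∈ W → HasFDerivAt (f · t) (f' x t) x := by
    intro x t h
    have hxt := (hf.differentiableOn one_ne_zero (x, t) h).differentiableAt (hW.mem_nhds h)
    exact hxt.hasFDerivAt.comp x (hasFDerivAt_prodMk_left (𝕜 := ℝ) x t)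
  obtain ⟨C, hC⟩ := isCompact_uIcc.exists_bound_of_continuousOn
    (hf'c.comp (Continuous.prodMk_right x₀).continuousOn hx₀)
  set u := {x | ∀ t ∈ [[a, b]], (x, t) ∈ W ∧ ‖f' x t‖ ≤ C + 1}
  -- tube lemma: by compactness of `[[a, b]]` the bound holds uniformly near `x₀`
  have hu : u ∈ 𝓝 x₀ := isCompact_uIcc.eventually_forall_of_forall_eventually fun t ht =>
    Eventually.and (hW.mem_nhds (hx₀ t ht)) <|
      ((hf'c.continuousAt (hW.mem_nhds (hx₀ t ht))).norm.eventually
        (gt_mem_nhds ((hC t ht).trans_lt (lt_add_one C)))).mono fun _ h => h.le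
  have hint : ∀ x ∈ interior u, HasFDerivAt (fun x => ∫ t in a..b, f x t)
      (∫ t in a..b, f' x t) x := by
    intro x hx
    have hxu : ∀ᶠ y in 𝓝 x, y ∈ u := mem_interior_iff_mem_nhds.1 hx
    exact intervalIntegral.hasFDerivAt_integral_of_dominated_of_fderiv_le
      (bound := fun _ => C + 1) hxu
      (hxu.mono fun y hy => hf.continuousOn.aestronglyMeasurable_slice fun t ht => (hy t ht).1)
      (hf.continuousOn.intervalIntegrable_slice fun t ht => (hxu.self_of_nhds t ht).1)
      (hf'c.aestronglyMeasurable_slice fun t ht => (hxu.self_of_nhds t ht).1)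
      (ae_of_all _ fun t ht y hy => (hy t (uIoc_subset_uIcc ht)).2) intervalIntegrable_const
      (ae_of_all _ fun t ht y hy => hdiff y t (hy t (uIoc_subset_uIcc ht)).1)
  have hcont : ContinuousOn (fun x => ∫ t in a..b, f' x t) (interior u) := by
    intro x hx
    have hxu : ∀ᶠ y in 𝓝 x, y ∈ u := mem_interior_iff_mem_nhds.1 hx
    refine (intervalIntegral.continuousAt_of_dominated_interval (bound := fun _ => C + 1)
      (hxu.mono fun y hy => hf'c.aestronglyMeasurable_slice fun t ht => (hy t ht).1)
      (hxu.mono fun y hy => ae_of_all _ fun t ht => (hy t (uIoc_subset_uIcc ht)).2)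
      intervalIntegrable_const
      (ae_of_all _ fun t ht => ?_)).continuousWithinAt
    exact (hf'c.continuousAt (hW.mem_nhds (hxu.self_of_nhds t (uIoc_subset_uIcc ht)).1)).comp
      (f := fun y => (y, t)) (Continuous.prodMk_left t).continuousAt
  exact contDiffAt_one_iff.2 ⟨_, _, interior_mem_nhds.2 hu, hcont, hint⟩

end ParametricIntegral

section SecondPartialDerivative

variable {V F : Type*} [NormedAddCommGroup V] [NormedSpace ℝ V]
  [NormedAddCommGroup F] [NormedSpace ℝ F] {E : V → V → F} {Ω : Set V}

noncomputable def fderivSnd (E : V → V → F) (p : V × V) : V →L[ℝ] F :=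
  (fderiv ℝ (uncurry E) p).comp (ContinuousLinearMap.inr ℝ V V)

noncomputable def avgFDerivSnd (E : V → V → F) (z z' : V) : V →L[ℝ] F :=
  ∫ t in (0 : ℝ)..1, fderivSnd E (z, z + t • (z' - z))

theorem DifferentiableAt.hasFDerivAt_fderivSnd {p : V × V}
    (h : DifferentiableAt ℝ (uncurry E) p) : HasFDerivAt (E p.1) (fderivSnd E p) p.2 := by
  have hp := h.hasFDerivAt
  exact hp.comp p.2 (hasFDerivAt_prodMk_right (𝕜 := ℝ) p.1 p.2)

theorem ContDiffOn.fderivSnd {s : Set (V × V)} {m n : WithTop ℕ∞}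
    (h : ContDiffOn ℝ n (uncurry E) s) (hs : IsOpen s) (hmn : m + 1 ≤ n) :
    ContDiffOn ℝ m (fderivSnd E) s :=
  (h.fderiv_of_isOpen hs hmn).clm_comp contDiffOn_const

theorem avgFDerivSnd_self [CompleteSpace F] (z : V) : avgFDerivSnd E z z = fderivSnd E (z, z) := by
  simp [avgFDerivSnd]

theorem Convex.mk_add_smul_sub_mem_prod (hΩ : Convex ℝ Ω) {z z' : V} (hz : z ∈ Ω)
    (hz' : z' ∈ Ω) {t : ℝ} (ht : t ∈ [[0, 1]]) : (z, z + t • (z' - z)) ∈ Ω ×ˢ Ω :=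
  ⟨hz, hΩ.add_smul_sub_mem hz hz' (by rwa [uIcc_of_le zero_le_one] at ht)⟩

theorem sub_eq_avgFDerivSnd_apply [CompleteSpace F] (hΩo : IsOpen Ω) (hΩc : Convex ℝ Ω)
    (hE : ContDiffOn ℝ 1 (uncurry E) (Ω ×ˢ Ω)) {z z' : V} (hz : z ∈ Ω) (hz' : z' ∈ Ω) :
    E z z' - E z z = avgFDerivSnd E z z' (z' - z) := by
  have hseg := fun t (ht : t ∈ [[(0 : ℝ), 1]]) => hΩc.mk_add_smul_sub_mem_prod hz hz' ht
  have hderiv : ∀ t ∈ [[(0 : ℝ), 1]], HasDerivAt (fun t : ℝ => E z (z + t • (z' - z)))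
      (fderivSnd E (z, z + t • (z' - z)) (z' - z)) t := by
    intro t ht
    have hline : HasDerivAt (fun t : ℝ => z + t • (z' - z)) (z' - z) t := by
      simpa using ((hasDerivAt_id t).smul_const (z' - z)).const_add z
    exact ((hE.differentiableOn one_ne_zero).differentiableAt
      ((hΩo.prod hΩo).mem_nhds (hseg t ht))).hasFDerivAt_fderivSnd.comp_hasDerivAt t hline
  have hcont : ContinuousOn (fun t : ℝ => fderivSnd E (z, z + t • (z' - z))) [[0, 1]] :=
    (hE.fderivSnd (m := 0) (hΩo.prod hΩo) (by simp)).continuousOn.comp (by fun_prop) hseg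
  calc E z z' - E z z = ∫ t in (0 : ℝ)..1, fderivSnd E (z, z + t • (z' - z)) (z' - z) := by
        simpa using (intervalIntegral.integral_eq_sub_of_hasDerivAt hderiv
          (hcont.clm_apply continuousOn_const).intervalIntegrable).symm
    _ = avgFDerivSnd E z z' (z' - z) :=
        (ContinuousLinearMap.intervalIntegral_apply hcont.intervalIntegrable _).symm

theorem contDiffOn_avgFDerivSnd [CompleteSpace F] (hΩo : IsOpen Ω) (hΩc : Convex ℝ Ω)
    (hE : ContDiffOn ℝ 2 (uncurry E) (Ω ×ˢ Ω)) :
    ContDiffOn ℝ 1 (uncurry (avgFDerivSnd E)) (Ω ×ˢ Ω) := by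
  have hσ : ContDiff ℝ 1 fun q : (V × V) × ℝ => (q.1.1, q.1.1 + q.2 • (q.1.2 - q.1.1)) := by
    fun_prop
  intro p hp
  exact (contDiffAt_one_intervalIntegral
    (f := fun (p : V × V) (t : ℝ) => fderivSnd E (p.1, p.1 + t • (p.2 - p.1)))
    ((hΩo.prod hΩo).preimage hσ.continuous)
    ((hE.fderivSnd (hΩo.prod hΩo) (by norm_num)).comp hσ.contDiffOn fun _ hq => hq)
    fun t ht => hΩc.mk_add_smul_sub_mem_prod hp.1 hp.2 ht).contDiffWithinAt

end SecondPartialDerivative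

section GramMatrix

variable {ι : Type*} [Fintype ι]

theorem sum_sq_mulVec_eq {R : Type*} [CommRing R] (A : Matrix ι ι R) (v : ι → R) :
    ∑ i, (A *ᵥ v) i ^ 2 = ∑ i, ∑ j, (Aᵀ * A) i j * v j * v i := by
  have h : (A *ᵥ v) ⬝ᵥ (A *ᵥ v) = ((Aᵀ * A) *ᵥ v) ⬝ᵥ v := by
    rw [dotProduct_comm _ v, ← mulVec_mulVec, dotProduct_mulVec v, vecMul_transpose]
  simpa only [dotProduct, mulVec, pow_two, Finset.sum_mul] using h

variable [DecidableEq ι]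

theorem contDiffOn_toMatrix'_apply {X : Type*} [NormedAddCommGroup X] [NormedSpace ℝ X]
    {L : X → (ι → ℝ) →L[ℝ] ι → ℝ} {s : Set X} {n : WithTop ℕ∞} (hL : ContDiffOn ℝ n L s)
    (i j : ι) : ContDiffOn ℝ n (fun x => LinearMap.toMatrix' (L x : (ι → ℝ) →ₗ[ℝ] ι → ℝ) i j) s :=
  let entry : ((ι → ℝ) →L[ℝ] ι → ℝ) →L[ℝ] ℝ :=
    (ContinuousLinearMap.proj i).comp (ContinuousLinearMap.apply ℝ (ι → ℝ) (Pi.single j 1))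
  entry.contDiff.comp_contDiffOn hL

theorem eventually_posDef_transpose_mul_self {X : Type*} [TopologicalSpace X]
    {L : X → (ι → ℝ) →L[ℝ] ι → ℝ} {x₀ : X} (hL : ContinuousAt L x₀)
    (e : (ι → ℝ) ≃L[ℝ] ι → ℝ) (he : L x₀ = e) :
    ∀ᶠ x in 𝓝 x₀, ((LinearMap.toMatrix' (L x : (ι → ℝ) →ₗ[ℝ] ι → ℝ))ᵀ *
      LinearMap.toMatrix' (L x : (ι → ℝ) →ₗ[ℝ] ι → ℝ)).PosDef := by
  filter_upwards [hL.preimage_mem_nhds (ContinuousLinearEquiv.isOpen.mem_nhds ⟨e, he.symm⟩)]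
    with x ⟨e', he'⟩
  rw [← conjTranspose_eq_transpose_of_trivial]
  refine PosDef.conjTranspose_mul_self _ fun v w h => e'.injective ?_
  simpa only [LinearMap.toMatrix'_mulVec, ← he', ContinuousLinearMap.coe_coe,
    ContinuousLinearEquiv.coe_coe] using h

end GramMatrix

theorem stmt_13_general (m : ℕ)
    (Ω : Set (Fin m → ℝ)) (hΩo : IsOpen Ω) (hΩc : Convex ℝ Ω)
    (E : (Fin m → ℝ) → (Fin m → ℝ) → Fin m → ℝ)
    (hE : ContDiffOn ℝ 2 (fun p : (Fin m → ℝ) × (Fin m → ℝ) => E p.1 p.2) (Ω ×ˢ Ω))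
    (hE0 : ∀ z ∈ Ω, E z z = 0)
    (hEid : ∀ z ∈ Ω, fderiv ℝ (fun w => E z w) z = ContinuousLinearMap.id ℝ (Fin m → ℝ)) :
    ∃ G : (Fin m → ℝ) → (Fin m → ℝ) → Matrix (Fin m) (Fin m) ℝ,
      (∀ i j : Fin m,
        ContDiffOn ℝ 1 (fun p : (Fin m → ℝ) × (Fin m → ℝ) => G p.1 p.2 i j) (Ω ×ˢ Ω)) ∧
      (∀ z ∈ Ω, ∀ z' ∈ Ω, (G z z').IsSymm ∧ (G z z').PosSemidef) ∧
      (∀ z ∈ Ω, ∀ z' ∈ Ω,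
        ∑ i : Fin m, (E z z' i) ^ 2 =
          ∑ i : Fin m, ∑ j : Fin m, G z z' i j * (z' - z) j * (z' - z) i) ∧
      (∀ z ∈ Ω, G z z = 1) ∧
      (∀ z₀ ∈ Ω, ∃ V ∈ nhds ((z₀, z₀) : (Fin m → ℝ) × (Fin m → ℝ)),
        ∀ p ∈ V ∩ Ω ×ˢ Ω, (G p.1 p.2).PosDef) := by
  set A : (Fin m → ℝ) → (Fin m → ℝ) → Matrix (Fin m) (Fin m) ℝ := fun z z' =>
    LinearMap.toMatrix' (avgFDerivSnd E z z' : (Fin m → ℝ) →ₗ[ℝ] Fin m → ℝ)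
  have hL : ContDiffOn ℝ 1 (uncurry (avgFDerivSnd E)) (Ω ×ˢ Ω) :=
    contDiffOn_avgFDerivSnd hΩo hΩc hE
  have hLdiag : ∀ z ∈ Ω, avgFDerivSnd E z z = ContinuousLinearMap.id ℝ (Fin m → ℝ) := by
    intro z hz
    rw [avgFDerivSnd_self, ← hEid z hz]
    exact ((hE.differentiableOn two_ne_zero).differentiableAt
      ((hΩo.prod hΩo).mem_nhds ⟨hz, hz⟩)).hasFDerivAt_fderivSnd.fderiv.symm
  refine ⟨fun z z' => (A z z')ᵀ * A z z', fun i j => ?_, fun z _ z' _ => ?_,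
    fun z hz z' hz' => ?_, fun z hz => ?_, fun z₀ hz₀ => ?_⟩
  · simp only [mul_apply, transpose_apply]
    exact ContDiffOn.sum fun k _ =>
      (contDiffOn_toMatrix'_apply hL k i).mul (contDiffOn_toMatrix'_apply hL k j)
  · exact ⟨isSymm_transpose_mul_self _, by simpa using posSemidef_conjTranspose_mul_self (A z z')⟩
  · have hEA : E z z' = A z z' *ᵥ (z' - z) := by
      rw [LinearMap.toMatrix'_mulVec, ContinuousLinearMap.coe_coe,
        ← sub_eq_avgFDerivSnd_apply hΩo hΩc (hE.of_le one_le_two) hz hz', hE0 z hz, sub_zero]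
    rw [hEA, sum_sq_mulVec_eq]
  · simp [A, hLdiag z hz]
  · have hpos := eventually_posDef_transpose_mul_self (x₀ := (z₀, z₀))
      (hL.continuousOn.continuousAt ((hΩo.prod hΩo).mem_nhds ⟨hz₀, hz₀⟩))
      (ContinuousLinearEquiv.refl ℝ _) (hLdiag z₀ hz₀)
    exact ⟨_, hpos, fun p hp => hp.1⟩

/-- If `E : Ω × Ω → ℝ^m` is `C²` on a convex open `Ω`, vanishes on
the diagonal, and has differential in the second variable equal to the identity on
the diagonal, then `|E(z,z̃)|² = ⟨G(z,z̃)(z̃−z), z̃−z⟩` for a `C¹` symmetric positive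
semidefinite matrix-valued `G` with `G(z,z) = Id`, positive definite near the
diagonal. -/
theorem stmt_13 (m : ℕ) (hm : 1 ≤ m)
    (Ω : Set (Fin m → ℝ)) (hΩo : IsOpen Ω) (hΩc : Convex ℝ Ω)
    (E : (Fin m → ℝ) → (Fin m → ℝ) → Fin m → ℝ)
    (hE : ContDiffOn ℝ 2 (fun p : (Fin m → ℝ) × (Fin m → ℝ) => E p.1 p.2) (Ω ×ˢ Ω))
    (hE0 : ∀ z ∈ Ω, E z z = 0)
    (hEid : ∀ z ∈ Ω, fderiv ℝ (fun w => E z w) z = ContinuousLinearMap.id ℝ (Fin m → ℝ)) :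
    ∃ G : (Fin m → ℝ) → (Fin m → ℝ) → Matrix (Fin m) (Fin m) ℝ,
      (∀ i j : Fin m,
        ContDiffOn ℝ 1 (fun p : (Fin m → ℝ) × (Fin m → ℝ) => G p.1 p.2 i j) (Ω ×ˢ Ω)) ∧
      (∀ z ∈ Ω, ∀ z' ∈ Ω, (G z z').IsSymm ∧ (G z z').PosSemidef) ∧
      (∀ z ∈ Ω, ∀ z' ∈ Ω,
        ∑ i : Fin m, (E z z' i) ^ 2 =
          ∑ i : Fin m, ∑ j : Fin m, G z z' i j * (z' - z) j * (z' - z) i) ∧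
      (∀ z ∈ Ω, G z z = 1) ∧
      (∀ z₀ ∈ Ω, ∃ V ∈ nhds ((z₀, z₀) : (Fin m → ℝ) × (Fin m → ℝ)),
        ∀ p ∈ V ∩ Ω ×ˢ Ω, (G p.1 p.2).PosDef) :=
  stmt_13_general m Ω hΩo hΩc E hE hE0 hEid
end
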